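/- For any graph G on n vertices, γ_I((G ⊙ K_1) ⊙ K_1) = 3n. -/

import Mathlib

/-!
For each vertex `v` of `G`, let `b` be its pendant in `G ⊙ K₁`, and `v'`, `b'` the pendants of `v`
and `b` in `(G ⊙ K₁) ⊙ K₁`. These four vertices form a path `v' – v – b – b'` that meets the rest
of the graph only in `v`. An Italian function has weight at least `3` on each such path: each of the
leaves `v'`, `b'` has positive weight or forces weight `2` on its neighbour, and if `b` has weight
`0` then `v` and `b'` together carry weight `2`. Conversely, weight `2` on `v` and `1` on `b'` is
Italian.
-/

open SimpleGraph Finset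
open scoped Classical

/-- An Italian dominating function: values in {0,1,2}, and every vertex with
value 0 has neighbor values summing to at least 2. -/
def IsItalian {V : Type*} [Fintype V] (G : SimpleGraph V) (f : V → ℕ) : Prop :=
  (∀ v, f v ≤ 2) ∧
    ∀ v, f v = 0 → 2 ≤ ∑ u ∈ Finset.univ.filter (fun w => G.Adj v w), f u

/-- The Italian domination number: minimum weight of an Italian dominating function. -/
noncomputable def italianDomNumber {V : Type*} [Fintype V] (G : SimpleGraph V) : ℕ :=
  sInf {w | ∃ f : V → ℕ, IsItalian G f ∧ ∑ v, f v = w}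

/-- The corona `G ⊙ K₁`: attach one pendant vertex (an `inr` copy) to each vertex of `G`. -/
def coronaK1 {V : Type*} (G : SimpleGraph V) : SimpleGraph (V ⊕ V) :=
  SimpleGraph.fromRel (fun a b =>
    match a, b with
    | Sum.inl u, Sum.inl v => G.Adj u v
    | Sum.inl u, Sum.inr v => u = v
    | Sum.inr u, Sum.inl v => u = v
    | Sum.inr _, Sum.inr _ => False)

/-- The corona `G ⊙ H`: one copy of `H` per vertex of `G`, each joined to that vertex. -/
def corona {V W : Type*} (G : SimpleGraph V) (H : SimpleGraph W) :
    SimpleGraph (V ⊕ V × W) :=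
  SimpleGraph.fromRel (fun a b =>
    match a, b with
    | Sum.inl u, Sum.inl v => G.Adj u v
    | Sum.inl u, Sum.inr p => u = p.1
    | Sum.inr p, Sum.inl v => p.1 = v
    | Sum.inr p, Sum.inr q => p.1 = q.1 ∧ H.Adj p.2 q.2)

section CoronaK1

variable {V : Type*} (G : SimpleGraph V)

@[simp]
lemma coronaK1_adj_inl_inl (u v : V) :
    (coronaK1 G).Adj (Sum.inl u) (Sum.inl v) ↔ G.Adj u v := by
  simp only [coronaK1, fromRel_adj, ne_eq, Sum.inl.injEq]
  exact ⟨fun ⟨_, h⟩ => h.elim id fun h => h.symm, fun h => ⟨h.ne, .inl h⟩⟩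

@[simp]
lemma coronaK1_adj_inl_inr (u v : V) : (coronaK1 G).Adj (Sum.inl u) (Sum.inr v) ↔ u = v := by
  simp [coronaK1, eq_comm]

@[simp]
lemma coronaK1_adj_inr_inl (u v : V) : (coronaK1 G).Adj (Sum.inr u) (Sum.inl v) ↔ u = v := by
  simp [coronaK1, eq_comm]

@[simp]
lemma coronaK1_not_adj_inr_inr (u v : V) : ¬(coronaK1 G).Adj (Sum.inr u) (Sum.inr v) := by
  simp [coronaK1]

variable [Fintype V]

lemma filter_coronaK1_adj_inr (v : V) :
    univ.filter (fun w => (coronaK1 G).Adj (Sum.inr v) w) = {Sum.inl v} := by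
  ext (w | w) <;> simp [eq_comm]

lemma IsItalian.two_le_of_pendant_eq_zero {f : V ⊕ V → ℕ} (hf : IsItalian (coronaK1 G) f)
    {v : V} (hv : f (Sum.inr v) = 0) : 2 ≤ f (Sum.inl v) := by
  simpa [filter_coronaK1_adj_inr] using hf.2 _ hv

end CoronaK1

section ItalianDomNumber

variable {V : Type*} [Fintype V] {G : SimpleGraph V}

lemma isItalian_const_two : IsItalian G 2 :=
  ⟨fun _ => le_rfl, fun _ h => absurd h two_ne_zero⟩

lemma italianDomNumber_le {f : V → ℕ} (hf : IsItalian G f) : italianDomNumber G ≤ ∑ v, f v :=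
  Nat.sInf_le ⟨f, hf, rfl⟩

lemma le_italianDomNumber {w : ℕ} (h : ∀ f, IsItalian G f → w ≤ ∑ v, f v) :
    w ≤ italianDomNumber G :=
  le_csInf ⟨_, 2, isItalian_const_two, rfl⟩ fun _ ⟨f, hf, hw⟩ => hw ▸ h f hf

end ItalianDomNumber

/- In `coronaK1 (coronaK1 G)`, the vertices `v`, `b`, `v'`, `b'` of the path are
`inl (inl v)`, `inl (inr v)`, `inr (inl v)`, `inr (inr v)`. -/

section DoubleCorona

variable {V : Type*}

def doubleCoronaItalian : (V ⊕ V) ⊕ (V ⊕ V) → ℕ :=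
  Sum.elim (Sum.elim 2 0) (Sum.elim 0 1)

lemma sum_doubleCoronaItalian [Fintype V] :
    ∑ x, doubleCoronaItalian (V := V) x = 3 * Fintype.card V := by
  simp only [doubleCoronaItalian, Fintype.sum_sum_type, Sum.elim_inl, Sum.elim_inr,
    Pi.ofNat_apply, sum_const, card_univ, smul_eq_mul]
  ring

variable [Fintype V] (G : SimpleGraph V)

lemma filter_coronaK1_coronaK1_adj_inl_inr (v : V) :
    univ.filter (fun w => (coronaK1 (coronaK1 G)).Adj (Sum.inl (Sum.inr v)) w) =
      {Sum.inl (Sum.inl v), Sum.inr (Sum.inr v)} := by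
  ext ((w | w) | (w | w)) <;> simp [eq_comm]

lemma isItalian_doubleCoronaItalian :
    IsItalian (coronaK1 (coronaK1 G)) (doubleCoronaItalian (V := V)) := by
  refine ⟨by rintro ((v | v) | (v | v)) <;> simp [doubleCoronaItalian], ?_⟩
  rintro ((v | v) | (v | v)) hv
  · simp [doubleCoronaItalian] at hv
  · rw [filter_coronaK1_coronaK1_adj_inl_inr, sum_pair (by simp)]
    simp [doubleCoronaItalian]
  · simp [filter_coronaK1_adj_inr, doubleCoronaItalian]
  · simp [doubleCoronaItalian] at hv

lemma IsItalian.three_le_block {f : (V ⊕ V) ⊕ (V ⊕ V) → ℕ}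
    (hf : IsItalian (coronaK1 (coronaK1 G)) f) (v : V) :
    3 ≤ f (.inl (.inl v)) + f (.inl (.inr v)) + f (.inr (.inl v)) + f (.inr (.inr v)) := by
  have hpendant_inl := hf.two_le_of_pendant_eq_zero (v := Sum.inl v)
  have hpendant_inr := hf.two_le_of_pendant_eq_zero (v := Sum.inr v)
  have hmiddle := hf.2 (.inl (.inr v))
  rw [filter_coronaK1_coronaK1_adj_inl_inr, sum_pair (by simp)] at hmiddle
  omega

end DoubleCorona

theorem italian_double_coronaK1 {V : Type*} [Fintype V] (G : SimpleGraph V) :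
    italianDomNumber (coronaK1 (coronaK1 G)) = 3 * Fintype.card V := by
  refine le_antisymm (sum_doubleCoronaItalian (V := V) ▸
    italianDomNumber_le (isItalian_doubleCoronaItalian G)) (le_italianDomNumber fun f hf => ?_)
  calc 3 * Fintype.card V = ∑ _v : V, 3 := by simp [mul_comm]
    _ ≤ ∑ v : V, (f (.inl (.inl v)) + f (.inl (.inr v)) + f (.inr (.inl v)) + f (.inr (.inr v))) :=
      sum_le_sum fun v _ => hf.three_le_block G v
    _ = ∑ x, f x := by simp only [Fintype.sum_sum_type, sum_add_distrib]; ring
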